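/- Let X be a real-valued random variable with E e^{tX} < ∞ for some t > 0, and take any u ∈ ℝ. Then the inequality P(X ≥ L_X^{*←}(u)) ≤ e^{−u} fails to hold if and only if all three of the following conditions take place: (i) x_max := sup supp(X) < ∞; (ii) p_max := P(X = x_max) > 0; and (iii) u > −ln p_max. -/

import Mathlib

open Set MeasureTheory Filter

/-- Legendre–Fenchel transform `L^*(x) = sup_{t>0} [t·x − L(t)]`, with values in `[-∞,∞]`. -/
noncomputable def LF (L : ℝ → EReal) (x : ℝ) : EReal :=
  ⨆ (t : ℝ) (_ : 0 < t), ((t * x : ℝ) : EReal) - L t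

/-- Smallest generalized inverse `L^{*←}(u) = inf {x ∈ ℝ : L^*(x) ≥ u}`, with `inf ∅ = ∞`. -/
noncomputable def geInv (L : ℝ → EReal) (u : ℝ) : EReal :=
  sInf ((fun x : ℝ => (x : EReal)) '' {x : ℝ | (u : EReal) ≤ LF L x})

/-- Largest generalized inverse `L^{*⇐}(u) = inf {x ∈ ℝ : L^*(x) > u}`, with `inf ∅ = ∞`. -/
noncomputable def tgeInv (L : ℝ → EReal) (u : ℝ) : EReal :=
  sInf ((fun x : ℝ => (x : EReal)) '' {x : ℝ | (u : EReal) < LF L x})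

/-- Hölder convolution `(L_1 ⊞ ⋯ ⊞ L_n)(t) = inf { Σ_j α_j L_j(t/α_j) : α_j > 0, Σ_j α_j = 1 }`,
with `inf ∅ = ∞`. -/
noncomputable def hconv (n : ℕ) (L : Fin n → ℝ → EReal) (t : ℝ) : EReal :=
  ⨅ (α : Fin n → ℝ) (_ : (∀ j, 0 < α j) ∧ ∑ j, α j = 1),
    ∑ j, (α j : EReal) * L j (t / α j)

/-- Cramér–Chernoff function `L_X(t) = ln E e^{tX}`, with values in `(-∞,∞]`. -/
noncomputable def cramer {Ω : Type*} [MeasurableSpace Ω] (μ : Measure Ω) (X : Ω → ℝ)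
    (t : ℝ) : EReal :=
  ENNReal.log (∫⁻ ω, ENNReal.ofReal (Real.exp (t * X ω)) ∂μ)

/-!
Markov's inequality for `e^{tX}` gives `L_X^*(x) ≤ -ln P(X ≥ x)`, so the bound holds whenever
the infimum `a = L_X^{*←}(u)` is attained, i.e. `L_X^*(a) ≥ u`, and also (letting `x → -∞`)
when `a = -∞`. If it is not attained, then `L_X^*(a) < u ≤ L_X^*(x)` for all `x > a`, and
convexity of `L_X^*` forces `L_X^* = ∞` on `(a, ∞)`; by Markov again `X ≤ a` almost surely, so
`a = x_max` and `P(X ≥ a) = p_max`, and the failure of the bound reads `u > -ln p_max`.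
Conversely, if `X ≤ x_max` a.s. then `L_X(t) ≤ t x_max`, so `L_X^* = ∞` beyond `x_max` while
`L_X^*(x_max) ≤ -ln p_max < u`, whence `L_X^{*←}(u) = x_max`.
-/

open scoped ENNReal Topology

lemma EReal.coe_sub_le_coe_iff {a b : ℝ} {z : EReal} :
    (a : EReal) - z ≤ b ↔ ((a - b : ℝ) : EReal) ≤ z := by
  induction z using EReal.rec with
  | bot =>
    simp only [EReal.coe_sub_bot, top_le_iff, EReal.coe_ne_top, le_bot_iff, EReal.coe_ne_bot]
  | top => simp
  | coe z => norm_cast; constructor <;> intro h <;> linarith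

lemma EReal.coe_sub_le_neg_of_add_le {b : ℝ} {a c : EReal} (h : (b : EReal) + a ≤ c) :
    (b : EReal) - c ≤ -a := by
  induction a using EReal.rec with
  | bot => simp
  | top => simp_all
  | coe a =>
    induction c using EReal.rec with
    | bot => norm_cast at h
    | top => simp
    | coe c => norm_cast at h ⊢; linarith

lemma ENNReal.ofReal_exp_neg_lt_iff {p : ℝ≥0∞} {u : ℝ} :
    ENNReal.ofReal (Real.exp (-u)) < p ↔ -ENNReal.log p < u := by
  rw [← ENNReal.log_lt_log_iff, ENNReal.log_ofReal_of_pos (Real.exp_pos _), Real.log_exp,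
    EReal.coe_neg, EReal.neg_lt_comm]

section LegendreFenchel

variable {L : ℝ → EReal}

lemma le_LF {t : ℝ} (ht : 0 < t) (x : ℝ) : ((t * x : ℝ) : EReal) - L t ≤ LF L x :=
  le_iSup₂ (f := fun t (_ : 0 < t) => ((t * x : ℝ) : EReal) - L t) t ht

lemma LF_mono (L : ℝ → EReal) : Monotone (LF L) := fun x y hxy =>
  iSup₂_mono fun t ht => EReal.sub_le_sub (EReal.coe_le_coe_iff.2 (by nlinarith)) le_rfl

lemma LF_le_neg_of_forall_add_le {x : ℝ} {a : EReal}
    (h : ∀ t, 0 < t → ((t * x : ℝ) : EReal) + a ≤ L t) : LF L x ≤ -a :=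
  iSup₂_le fun t ht => EReal.coe_sub_le_neg_of_add_le (h t ht)

lemma LF_eq_top_of_le_mul {m x : ℝ} (h : ∀ t, 0 < t → L t ≤ ((t * m : ℝ) : EReal))
    (hx : m < x) : LF L x = ⊤ := by
  refine (EReal.eq_top_iff_forall_lt _).2 fun b => ?_
  obtain ⟨t, ht, hbt⟩ : ∃ t, 0 < t ∧ b < t * (x - m) :=
    ⟨(|b| + 1) / (x - m), by have := sub_pos.2 hx; positivity, by
      rw [div_mul_cancel₀ _ (sub_pos.2 hx).ne']; linarith [le_abs_self b]⟩
  calc (b : EReal) < ((t * x - t * m : ℝ) : EReal) := by exact_mod_cast (by linarith)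
    _ ≤ ((t * x : ℝ) : EReal) - L t := by
        rw [EReal.coe_sub]; exact EReal.sub_le_sub le_rfl (h t ht)
    _ ≤ LF L x := le_LF ht x

lemma LF_add_mul_sub_le {r x c C l : ℝ} (hl₀ : 0 ≤ l) (hl₁ : l ≤ 1)
    (hr : LF L r ≤ c) (hx : LF L x ≤ C) :
    LF L (r + l * (x - r)) ≤ ((c + l * (C - c) : ℝ) : EReal) := by
  refine iSup₂_le fun t ht => EReal.coe_sub_le_coe_iff.2 ?_
  have hLr := EReal.coe_sub_le_coe_iff.1 ((le_LF ht r).trans hr)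
  have hLx := EReal.coe_sub_le_coe_iff.1 ((le_LF ht x).trans hx)
  have hcomb : t * (r + l * (x - r)) - (c + l * (C - c))
      = (1 - l) * (t * r - c) + l * (t * x - C) := by ring
  rcases le_total (t * r - c) (t * x - C) with hle | hle
  · exact le_trans (by rw [hcomb]; exact_mod_cast (by nlinarith)) hLx
  · exact le_trans (by rw [hcomb]; exact_mod_cast (by nlinarith)) hLr

lemma LF_eq_top_of_forall_gt {r u : ℝ} (hr : LF L r < u)
    (hgt : ∀ x, r < x → (u : EReal) ≤ LF L x) {x : ℝ} (hx : r < x) : LF L x = ⊤ := by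
  by_contra hne
  obtain ⟨C, hC, -⟩ := EReal.lt_iff_exists_real_btwn.1 (Ne.lt_top hne)
  obtain ⟨c, hc, hcu⟩ := EReal.lt_iff_exists_real_btwn.1 hr
  have hlim : Tendsto (fun l : ℝ => c + l * (C - c)) (𝓝[>] 0) (𝓝 c) := by
    simpa using ((by fun_prop : Continuous fun l : ℝ => c + l * (C - c)).tendsto 0).mono_left
      nhdsWithin_le_nhds
  have hcu' : c < u := EReal.coe_lt_coe_iff.1 hcu
  obtain ⟨l, hlu, hl⟩ :=
    ((hlim.eventually (eventually_lt_nhds hcu')).and (Ioo_mem_nhdsGT one_pos)).exists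
  refine (hgt _ (lt_add_of_pos_right r (mul_pos hl.1 (sub_pos.2 hx)))).not_gt ?_
  exact (LF_add_mul_sub_le hl.1.le hl.2.le hc.le hC.le).trans_lt (EReal.coe_lt_coe_iff.2 hlu)

lemma le_LF_of_geInv_lt {u x : ℝ} (h : geInv L u < x) : (u : EReal) ≤ LF L x := by
  obtain ⟨-, ⟨s, hs, rfl⟩, hsx⟩ := sInf_lt_iff.1 h
  exact hs.trans (LF_mono L (EReal.coe_lt_coe_iff.1 hsx).le)

lemma geInv_eq_of_LF_lt {u m : ℝ} (hm : LF L m < u) (hgt : ∀ x, m < x → LF L x = ⊤) :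
    geInv L u = m := by
  refine le_antisymm (EReal.le_of_forall_lt_iff_le.1 fun x hx => ?_) (le_sInf ?_)
  · exact sInf_le ⟨x, by simp [hgt x (EReal.coe_lt_coe_iff.1 hx)], rfl⟩
  · rintro _ ⟨x, hx, rfl⟩
    exact EReal.coe_le_coe_iff.2 ((LF_mono L).reflect_lt (hm.trans_le hx)).le

end LegendreFenchel

section Chernoff

variable {Ω : Type*} [MeasurableSpace Ω] {μ : Measure Ω} {X : Ω → ℝ}

lemma ofReal_exp_mul_measure_Ici_le_lintegral (hX : Measurable X) {t : ℝ} (ht : 0 < t) (x : ℝ) :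
    ENNReal.ofReal (Real.exp (t * x)) * μ {ω | x ≤ X ω} ≤
      ∫⁻ ω, ENNReal.ofReal (Real.exp (t * X ω)) ∂μ := by
  have hset : {ω | x ≤ X ω} =
      {ω | ENNReal.ofReal (Real.exp (t * x)) ≤ ENNReal.ofReal (Real.exp (t * X ω))} := by
    ext ω
    simp [ENNReal.ofReal_le_ofReal_iff (Real.exp_pos _).le, ht]
  rw [hset]
  exact mul_meas_ge_le_lintegral₀ (hX.const_mul t).exp.ennreal_ofReal.aemeasurable _

lemma LF_cramer_le_neg_log_measure_Ici (hX : Measurable X) (x : ℝ) :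
    LF (cramer μ X) x ≤ -ENNReal.log (μ {ω | x ≤ X ω}) := by
  refine LF_le_neg_of_forall_add_le fun t ht => ?_
  have := ENNReal.log_le_log (ofReal_exp_mul_measure_Ici_le_lintegral hX ht x (μ := μ))
  rwa [ENNReal.log_mul_add, ENNReal.log_ofReal_of_pos (Real.exp_pos _), Real.log_exp] at this

theorem measure_Ici_le_of_le_LF_cramer (hX : Measurable X) {x u : ℝ}
    (hu : (u : EReal) ≤ LF (cramer μ X) x) :
    μ {ω | x ≤ X ω} ≤ ENNReal.ofReal (Real.exp (-u)) :=
  not_lt.1 fun h => (ENNReal.ofReal_exp_neg_lt_iff.1 h).not_ge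
    (hu.trans (LF_cramer_le_neg_log_measure_Ici hX x))

lemma measure_Ici_eq_zero_of_LF_cramer_eq_top (hX : Measurable X) {x : ℝ}
    (h : LF (cramer μ X) x = ⊤) : μ {ω | x ≤ X ω} = 0 := by
  simpa [h] using LF_cramer_le_neg_log_measure_Ici hX x (μ := μ)

lemma cramer_le_mul_of_ae_le [IsProbabilityMeasure μ] {m : ℝ} (hm : ∀ᵐ ω ∂μ, X ω ≤ m)
    {t : ℝ} (ht : 0 ≤ t) : cramer μ X t ≤ ((t * m : ℝ) : EReal) := by
  have hle : ∫⁻ ω, ENNReal.ofReal (Real.exp (t * X ω)) ∂μ ≤ ENNReal.ofReal (Real.exp (t * m)) :=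
    calc ∫⁻ ω, ENNReal.ofReal (Real.exp (t * X ω)) ∂μ
        ≤ ∫⁻ _, ENNReal.ofReal (Real.exp (t * m)) ∂μ :=
          lintegral_mono_ae (hm.mono fun _ hω => by gcongr)
      _ = ENNReal.ofReal (Real.exp (t * m)) := by simp
  simpa [cramer, ENNReal.log_ofReal_of_pos (Real.exp_pos _)] using ENNReal.log_le_log hle

lemma measure_Ici_eq_measure_eq_of_ae_le {m : ℝ} (hm : ∀ᵐ ω ∂μ, X ω ≤ m) :
    μ {ω | m ≤ X ω} = μ {ω | X ω = m} :=
  measure_congr <| hm.mono fun _ hω => propext ⟨fun h => le_antisymm hω h, fun h => h.ge⟩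

lemma ae_le_of_forall_measure_Ici_eq_zero {r : ℝ} (h : ∀ x, r < x → μ {ω | x ≤ X ω} = 0) :
    ∀ᵐ ω ∂μ, X ω ≤ r := by
  obtain ⟨x, -, hrx, hx⟩ := exists_seq_strictAnti_tendsto r
  have hlt : ∀ᵐ ω ∂μ, ∀ n, X ω < x n :=
    ae_all_iff.2 fun n => by simpa [ae_iff] using h (x n) (hrx n)
  exact hlt.mono fun ω hω => ge_of_tendsto' hx fun n => (hω n).le

lemma measure_univ_le_of_forall_measure_Ici_le {c : ℝ≥0∞} (h : ∀ x, μ {ω | x ≤ X ω} ≤ c) :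
    μ univ ≤ c := by
  have hanti : Antitone fun x : ℝ => {ω | x ≤ X ω} := fun x y hxy ω hω => hxy.trans hω
  have hunion : (⋃ x : ℝ, {ω | x ≤ X ω}) = univ :=
    eq_univ_of_forall fun ω => mem_iUnion.2 ⟨X ω, le_refl (X ω)⟩
  rw [← hunion, hanti.measure_iUnion]
  exact iSup_le h

lemma essSup_coe_eq_of_ae_le {m : ℝ} (hm : ∀ᵐ ω ∂μ, X ω ≤ m) (hpos : μ {ω | X ω = m} ≠ 0) :
    essSup (fun ω => (X ω : EReal)) μ = m := by
  refine le_antisymm (essSup_le_of_ae_le _ (hm.mono fun ω hω => EReal.coe_le_coe_iff.2 hω)) ?_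
  by_contra hlt
  have hae_lt := ae_iff.1 (ae_lt_of_essSup_lt (not_le.1 hlt))
  exact hpos (measure_mono_null (fun ω (hω : X ω = m) => by simp [hω]) hae_lt)

theorem ofReal_exp_neg_lt_measure_geInv_cramer_iff [IsProbabilityMeasure μ] (hX : Measurable X)
    (u : ℝ) :
    ENNReal.ofReal (Real.exp (-u)) < μ {ω | geInv (cramer μ X) u ≤ (X ω : EReal)} ↔
      ∃ m : ℝ, (∀ᵐ ω ∂μ, X ω ≤ m) ∧ -ENNReal.log (μ {ω | X ω = m}) < u := by
  constructor
  · intro hlt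
    induction hinv : geInv (cramer μ X) u using EReal.rec with
    | bot =>
      have huniv : μ univ ≤ ENNReal.ofReal (Real.exp (-u)) :=
        measure_univ_le_of_forall_measure_Ici_le fun x =>
          measure_Ici_le_of_le_LF_cramer hX (le_LF_of_geInv_lt (hinv ▸ EReal.bot_lt_coe x))
      exact (hlt.trans_le ((measure_mono (subset_univ _)).trans huniv)).false.elim
    | top => simp [hinv] at hlt
    | coe r =>
      simp only [hinv, EReal.coe_le_coe_iff] at hlt
      have hr : LF (cramer μ X) r < u :=
        not_le.1 fun hu => hlt.not_ge (measure_Ici_le_of_le_LF_cramer hX hu)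
      have hgt : ∀ x, r < x → (u : EReal) ≤ LF (cramer μ X) x :=
        fun x hx => le_LF_of_geInv_lt (hinv ▸ EReal.coe_lt_coe_iff.2 hx)
      have hae : ∀ᵐ ω ∂μ, X ω ≤ r := ae_le_of_forall_measure_Ici_eq_zero fun x hx =>
        measure_Ici_eq_zero_of_LF_cramer_eq_top hX (LF_eq_top_of_forall_gt hr hgt hx)
      rw [measure_Ici_eq_measure_eq_of_ae_le hae] at hlt
      exact ⟨r, hae, ENNReal.ofReal_exp_neg_lt_iff.1 hlt⟩
  · rintro ⟨m, hae, hu⟩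
    have hm : LF (cramer μ X) m < u := by
      refine lt_of_le_of_lt ?_ hu
      simpa [measure_Ici_eq_measure_eq_of_ae_le hae]
        using LF_cramer_le_neg_log_measure_Ici hX m (μ := μ)
    have hinv : geInv (cramer μ X) u = m := geInv_eq_of_LF_lt hm fun x hx =>
      LF_eq_top_of_le_mul (fun t ht => cramer_le_mul_of_ae_le hae ht.le) hx
    simpa [hinv, measure_Ici_eq_measure_eq_of_ae_le hae] using ENNReal.ofReal_exp_neg_lt_iff.2 hu

end Chernoff

theorem prob_ge_geInv_fails_iff_general (Ω : Type*) [MeasurableSpace Ω] (μ : Measure Ω)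
    [IsProbabilityMeasure μ] (X : Ω → ℝ) (hX : Measurable X)
    (u : ℝ) :
    ¬ (μ {ω | geInv (cramer μ X) u ≤ (X ω : EReal)} ≤ ENNReal.ofReal (Real.exp (-u))) ↔
      (essSup (fun ω => (X ω : EReal)) μ < ⊤ ∧
        0 < μ {ω | (X ω : EReal) = essSup (fun ω' => (X ω' : EReal)) μ} ∧
        -(ENNReal.log (μ {ω | (X ω : EReal) = essSup (fun ω' => (X ω' : EReal)) μ})) <
          (u : EReal)) := by
  rw [not_le, ofReal_exp_neg_lt_measure_geInv_cramer_iff hX]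
  constructor
  · rintro ⟨m, hae, hu⟩
    have hpos : 0 < μ {ω | X ω = m} := pos_iff_ne_zero.2 fun h0 => by simp [h0] at hu
    simpa [essSup_coe_eq_of_ae_le hae hpos.ne', hpos] using hu
  · rintro ⟨hlt, hpos, hu⟩
    induction hsup : essSup (fun ω => (X ω : EReal)) μ using EReal.rec with
    | bot => simp [hsup] at hpos
    | top => simp [hsup] at hlt
    | coe m =>
      refine ⟨m, ?_, by simpa [hsup] using hu⟩
      filter_upwards [ae_le_essSup (f := fun ω => (X ω : EReal))] with ω hω
      simpa [hsup] using hω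

/-- Proposition on when the non-strict inequality fails. The inequality
`P(X ≥ L_X^{*←}(u)) ≤ e^{-u}` fails if and only if `x_max = ess sup X < ∞`,
`p_max = P(X = x_max) > 0` and `u > -ln p_max`. -/
theorem prob_ge_geInv_fails_iff (Ω : Type*) [MeasurableSpace Ω] (μ : Measure Ω)
    [IsProbabilityMeasure μ] (X : Ω → ℝ) (hX : Measurable X)
    (hfin : ∃ t : ℝ, 0 < t ∧ ∫⁻ ω, ENNReal.ofReal (Real.exp (t * X ω)) ∂μ ≠ ⊤)
    (u : ℝ) :
    ¬ (μ {ω | geInv (cramer μ X) u ≤ (X ω : EReal)} ≤ ENNReal.ofReal (Real.exp (-u))) ↔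
      (essSup (fun ω => (X ω : EReal)) μ < ⊤ ∧
        0 < μ {ω | (X ω : EReal) = essSup (fun ω' => (X ω' : EReal)) μ} ∧
        -(ENNReal.log (μ {ω | (X ω : EReal) = essSup (fun ω' => (X ω' : EReal)) μ})) <
          (u : EReal)) :=
  prob_ge_geInv_fails_iff_general Ω μ X hX u
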